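/- Suppose S is finite and Σ(f) ≠ ∅. Then the collection of minimal elements of cofInv(f) contained in Σ(f) is nonempty and has cardinality at most the cardinality of S. -/

import Mathlib

open Set Topology Function

variable {X : Type*}

/-- `A` is mod-f-invariant: `g(A \ S) ⊆ A`. -/
def ModInv (g : X → X) (S A : Set X) : Prop := g '' (A \ S) ⊆ A

/-- `A` is fully mod-f-invariant: both `A` and its complement are mod-f-invariant. -/
def FullInv (g : X → X) (S A : Set X) : Prop := ModInv g S A ∧ ModInv g S Aᶜ

/-- The least fully mod-f-invariant set containing `A`. -/
def fullHull (g : X → X) (S A : Set X) : Set X := ⋂₀ {B | FullInv g S B ∧ A ⊆ B}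

/-- The least mod-f-invariant set containing `A`. -/
def modHull (g : X → X) (S A : Set X) : Set X := ⋂₀ {B | ModInv g S B ∧ A ⊆ B}

/-- `R(A)`: points whose orbit reaches `A` before hitting `S`. -/
def Reach (g : X → X) (S A : Set X) : Set X :=
  {x | ∃ n : ℕ, (∀ k < n, g^[k] x ∉ S) ∧ g^[n] x ∈ A}

variable [TopologicalSpace X]

/-- A set is regular open if it equals the interior of its closure. -/
def RegOpen (O : Set X) : Prop := O = interior (closure O)

/-- `cofInv f`: the nonempty regular open fully mod-f-invariant sets. -/
def CofInv (g : X → X) (S : Set X) : Set (Set X) :=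
  {D | D.Nonempty ∧ RegOpen D ∧ FullInv g S D}

/-- A minimal element of `cofInv f`. -/
def MinCofInv (g : X → X) (S : Set X) (D : Set X) : Prop :=
  D ∈ CofInv g S ∧ ∀ E ∈ CofInv g S, E ⊆ D → E = D

/-- `coInv f`: the nonempty regular open mod-f-invariant sets. -/
def CoInv (g : X → X) (S : Set X) : Set (Set X) :=
  {U | U.Nonempty ∧ RegOpen U ∧ ModInv g S U}

/-- A transitive element of `coInv f`. -/
def TransElem (g : X → X) (S : Set X) (U : Set X) : Prop :=
  U ∈ CoInv g S ∧ ∀ V ∈ CoInv g S, V ⊆ U → V = U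

/-- A transitive cascade: a decreasing sequence of elements of `coInv f` that is
eventually inside every element of `coInv f` meeting its first term. -/
def IsCascade (g : X → X) (S : Set X) (γ : ℕ → Set X) : Prop :=
  Antitone γ ∧ (∀ n, γ n ∈ CoInv g S) ∧
    ∀ V ∈ CoInv g S, (V ∩ γ 0).Nonempty → ∃ m, γ m ⊆ V

/-- The core of a cascade. -/
def Core (γ : ℕ → Set X) : Set X := ⋂ n, closure (γ n)

/-- The domain of a cascade. -/
def Domain (g : X → X) (S : Set X) (γ : ℕ → Set X) : Set X :=
  interior (closure (⋃₀ {U | U ∈ CoInv g S ∧ γ 0 ⊆ U ∧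
    ∀ V ∈ CoInv g S, (V ∩ U).Nonempty → ∃ m, γ m ⊆ V}))

/-- `Germ x`: the intersection of the closures of the elements of `cofInv f` containing `x`. -/
def Germ (g : X → X) (S : Set X) (x : X) : Set X :=
  ⋂ D ∈ {D | D ∈ CofInv g S ∧ x ∈ D}, closure D

/-- `M(f)`: the union of all minimal elements of `cofInv f`. -/
def MinUnion (g : X → X) (S : Set X) : Set X := ⋃₀ {D | MinCofInv g S D}

/-- `N(f) = X \ cl(M(f))`. -/
def NonMin (g : X → X) (S : Set X) : Set X := (closure (MinUnion g S))ᶜ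

section Aux

variable {g : X → X} {S A B C D E U V : Set X}

lemma modInv_iff : ModInv g S A ↔ ∀ x ∈ A, x ∉ S → g x ∈ A := by
  constructor
  · intro h x hx hxs
    exact h ⟨x, ⟨hx, hxs⟩, rfl⟩
  · rintro h y ⟨x, ⟨hx, hxs⟩, rfl⟩
    exact h x hx hxs

lemma regOpen_isOpen (h : RegOpen A) : IsOpen A := by
  rw [h]; exact isOpen_interior

lemma regOpen_interior_of_closed (hC : IsClosed C) : RegOpen (interior C) := by
  refine Subset.antisymm ?_ ?_
  · exact interior_maximal subset_closure isOpen_interior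
  · exact interior_mono (closure_minimal interior_subset hC)

lemma regOpen_interior_closure (A : Set X) : RegOpen (interior (closure A)) :=
  regOpen_interior_of_closed isClosed_closure

lemma regOpen_inter (hU : RegOpen U) (hV : RegOpen V) : RegOpen (U ∩ V) := by
  refine Subset.antisymm ?_ ?_
  · exact interior_maximal subset_closure ((regOpen_isOpen hU).inter (regOpen_isOpen hV))
  · intro x hx
    constructor
    · have : interior (closure (U ∩ V)) ⊆ interior (closure U) :=
        interior_mono (closure_mono inter_subset_left)
      exact hU ▸ this hx
    · have : interior (closure (U ∩ V)) ⊆ interior (closure V) :=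
        interior_mono (closure_mono inter_subset_right)
      exact hV ▸ this hx

lemma fullInv_inter (hA : FullInv g S A) (hB : FullInv g S B) : FullInv g S (A ∩ B) := by
  constructor
  · rw [modInv_iff]
    intro x hx hxs
    exact ⟨modInv_iff.mp hA.1 x hx.1 hxs, modInv_iff.mp hB.1 x hx.2 hxs⟩
  · rw [modInv_iff]
    intro x hx hxs
    rcases not_and_or.mp hx with h | h
    · exact fun hc => (modInv_iff.mp hA.2 x h hxs) hc.1
    · exact fun hc => (modInv_iff.mp hB.2 x h hxs) hc.2

lemma fullInv_compl (hA : FullInv g S A) : FullInv g S Aᶜ :=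
  ⟨hA.2, by rw [compl_compl]; exact hA.1⟩

lemma modInv_closure (hreg1 : ∀ O : Set X, IsOpen O → IsOpen (g ⁻¹' O \ S))
    (hA : ModInv g S A) : ModInv g S (closure A) := by
  rw [modInv_iff]
  intro x hx hxs
  rw [mem_closure_iff]
  intro O hO hgx
  have hU : IsOpen (g ⁻¹' O \ S) := hreg1 O hO
  have hxU : x ∈ g ⁻¹' O \ S := ⟨hgx, hxs⟩
  obtain ⟨a, haU, haA⟩ := mem_closure_iff.mp hx _ hU hxU
  exact ⟨g a, haU.1, modInv_iff.mp hA a haA haU.2⟩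

lemma modInv_interior (hreg2 : ∀ O : Set X, IsOpen O → IsOpen (g '' (O \ S)))
    (hA : ModInv g S A) : ModInv g S (interior A) := by
  refine interior_maximal ?_ (hreg2 _ isOpen_interior)
  exact (image_mono (f := g) (diff_subset_diff_left interior_subset)).trans hA

lemma fullInv_closure (hreg1 : ∀ O : Set X, IsOpen O → IsOpen (g ⁻¹' O \ S))
    (hreg2 : ∀ O : Set X, IsOpen O → IsOpen (g '' (O \ S)))
    (hA : FullInv g S A) : FullInv g S (closure A) := by
  constructor
  · exact modInv_closure hreg1 hA.1
  · rw [← interior_compl]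
    exact modInv_interior hreg2 hA.2

lemma fullInv_interior (hreg1 : ∀ O : Set X, IsOpen O → IsOpen (g ⁻¹' O \ S))
    (hreg2 : ∀ O : Set X, IsOpen O → IsOpen (g '' (O \ S)))
    (hA : FullInv g S A) : FullInv g S (interior A) := by
  have := fullInv_closure hreg1 hreg2 (fullInv_compl hA)
  have h2 := fullInv_compl this
  rwa [← interior_compl, compl_compl] at h2

lemma fullInv_fullHull (g : X → X) (S A : Set X) : FullInv g S (fullHull g S A) := by
  constructor
  · rw [modInv_iff]
    intro x hx hxs
    intro B hB
    exact modInv_iff.mp hB.1.1 x (hx B hB) hxs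
  · rw [modInv_iff]
    intro x hx hxs
    intro hc
    simp only [fullHull, mem_sInter] at hc
    apply hx
    intro B hB
    by_contra hxB
    exact modInv_iff.mp hB.1.2 x hxB hxs (hc B hB)

lemma subset_fullHull (g : X → X) (S A : Set X) : A ⊆ fullHull g S A :=
  subset_sInter fun _ hB => hB.2

lemma fullInv_reach (g : X → X) (S : Set X) : FullInv g S (Reach g S S) := by
  constructor
  · rw [modInv_iff]
    rintro x ⟨n, h1, h2⟩ hxs
    cases n with
    | zero => exact absurd (by simpa using h2) hxs
    | succ m =>
      refine ⟨m, fun k hk => ?_, ?_⟩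
      · rw [← Function.iterate_succ_apply]
        exact h1 (k + 1) (by omega)
      · rw [← Function.iterate_succ_apply]
        exact h2
  · rw [modInv_iff]
    intro x hx hxs hc
    apply hx
    obtain ⟨n, h1, h2⟩ := hc
    refine ⟨n + 1, fun k hk => ?_, ?_⟩
    · cases k with
      | zero => simpa using hxs
      | succ j =>
        rw [Function.iterate_succ_apply]
        exact h1 j (by omega)
    · rw [Function.iterate_succ_apply]
      exact h2

lemma self_subset_reach (g : X → X) (S : Set X) : S ⊆ Reach g S S := by
  intro x hx
  exact ⟨0, fun k hk => absurd hk (Nat.not_lt_zero k), by simpa using hx⟩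

lemma fullHull_subset_reach (g : X → X) (S : Set X) :
    fullHull g S S ⊆ Reach g S S :=
  sInter_subset_of_mem ⟨fullInv_reach g S, self_subset_reach g S⟩

/-- Any element of `CofInv` contained in `Σ(f)` meets `S`. -/
lemma cofInv_meets_S (hD : D ∈ CofInv g S)
    (hsub : D ⊆ interior (closure (fullHull g S S))) : (D ∩ S).Nonempty := by
  obtain ⟨hne, hro, hfi⟩ := hD
  obtain ⟨x₀, hx₀⟩ := hne
  have hDo : IsOpen D := regOpen_isOpen hro
  have hx₀c : x₀ ∈ closure (fullHull g S S) := interior_subset (hsub hx₀)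
  obtain ⟨x, hxD, hxH⟩ := mem_closure_iff.mp hx₀c D hDo hx₀
  obtain ⟨n, havoid, hmem⟩ := fullHull_subset_reach g S hxH
  have key : ∀ k ≤ n, g^[k] x ∈ D := by
    intro k
    induction k with
    | zero => intro _; simpa using hxD
    | succ k ih =>
      intro hk
      have h1 : g^[k] x ∈ D := ih (Nat.le_of_succ_le hk)
      have h2 : g^[k] x ∉ S := havoid k (Nat.lt_of_succ_le hk)
      rw [Function.iterate_succ_apply']
      exact modInv_iff.mp hfi.1 _ h1 h2
  exact ⟨g^[n] x, key n le_rfl, hmem⟩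

/-- Distinct minimal elements of `CofInv` are disjoint. -/
lemma minCofInv_inter_empty (hD : MinCofInv g S D) (hE : MinCofInv g S E)
    (hne : D ≠ E) : D ∩ E = ∅ := by
  by_contra h
  have hnonempty : (D ∩ E).Nonempty := nonempty_iff_ne_empty.mpr h
  have hmem : D ∩ E ∈ CofInv g S :=
    ⟨hnonempty, regOpen_inter hD.1.2.1 hE.1.2.1, fullInv_inter hD.1.2.2 hE.1.2.2⟩
  have h1 : D ∩ E = D := hD.2 _ hmem inter_subset_left
  have h2 : D ∩ E = E := hE.2 _ hmem inter_subset_right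
  exact hne (h1 ▸ h2)

end Aux

theorem stmt16 {X : Type*} [MetricSpace X] [CompleteSpace X]
    [TopologicalSpace.SeparableSpace X] [∀ x : X, (𝓝[≠] x).NeBot]
    (g : X → X) (S : Set X) (hScl : IsClosed S) (hSnd : IsNowhereDense S)
    (hreg1 : ∀ O : Set X, IsOpen O → IsOpen (g ⁻¹' O \ S))
    (hreg2 : ∀ O : Set X, IsOpen O → IsOpen (g '' (O \ S))) (hSfin : S.Finite)
    (hSig : (interior (closure (fullHull g S S))).Nonempty) :
    {D : Set X | MinCofInv g S D ∧ D ⊆ interior (closure (fullHull g S S))}.Nonempty ∧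
      Cardinal.mk {D : Set X | MinCofInv g S D ∧ D ⊆ interior (closure (fullHull g S S))} ≤
        Cardinal.mk S := by
  classical
  set Sig := interior (closure (fullHull g S S)) with hSigdef
  -- Σ(f) itself is in CofInv
  have hSigCof : Sig ∈ CofInv g S := by
    refine ⟨hSig, regOpen_interior_closure _, ?_⟩
    exact fullInv_interior hreg1 hreg2 (fullInv_closure hreg1 hreg2 (fullInv_fullHull g S S))
  -- existence of a minimal element inside Σ(f)
  have hex : ∃ n, ∃ E : Set X, E ∈ CofInv g S ∧ E ⊆ Sig ∧ (E ∩ S).ncard = n :=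
    ⟨(Sig ∩ S).ncard, Sig, hSigCof, subset_rfl, rfl⟩
  obtain ⟨E, hEc, hEsub, hEcard⟩ := Nat.find_spec hex
  have hEmin : MinCofInv g S E := by
    refine ⟨hEc, fun E' hE'c hE'sub => ?_⟩
    by_contra hne
    -- F = E \ closure E' is a nonempty element of CofInv
    have hE'o : IsOpen E' := regOpen_isOpen hE'c.2.1
    have hEo : IsOpen E := regOpen_isOpen hEc.2.1
    have hnotsub : ¬ E ⊆ closure E' := by
      intro hc
      have : E ⊆ E' := by
        have := interior_maximal hc hEo
        rwa [← hE'c.2.1] at this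
      exact hne (Subset.antisymm hE'sub this)
    obtain ⟨z, hzE, hzc⟩ := not_subset.mp hnotsub
    set F := E ∩ (closure E')ᶜ with hFdef
    have hFne : F.Nonempty := ⟨z, hzE, hzc⟩
    have hFro : RegOpen F := by
      refine regOpen_inter hEc.2.1 ?_
      rw [← interior_compl]
      exact regOpen_interior_of_closed (isClosed_compl_iff.mpr hE'o)
    have hFfi : FullInv g S F := by
      refine fullInv_inter hEc.2.2 ?_
      have h1 : FullInv g S (closure E') := fullInv_closure hreg1 hreg2 hE'c.2.2
      exact fullInv_compl h1
    have hFc : F ∈ CofInv g S := ⟨hFne, hFro, hFfi⟩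
    have hFsub : F ⊆ Sig := inter_subset_left.trans hEsub
    -- F meets S, giving a point of E ∩ S outside E'
    obtain ⟨y, hyF, hyS⟩ := cofInv_meets_S hFc hFsub
    have hssub : E' ∩ S ⊂ E ∩ S := by
      refine ⟨inter_subset_inter_left S hE'sub, ?_⟩
      intro hc
      have : y ∈ E' ∩ S := hc ⟨hyF.1, hyS⟩
      exact hyF.2 (subset_closure this.1)
    have hfin : (E ∩ S).Finite := hSfin.subset inter_subset_right
    have hlt : (E' ∩ S).ncard < (E ∩ S).ncard := Set.ncard_lt_ncard hssub hfin
    have hge : Nat.find hex ≤ (E' ∩ S).ncard :=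
      Nat.find_min' hex ⟨E', hE'c, hE'sub.trans hEsub, rfl⟩
    omega
  constructor
  · exact ⟨E, hEmin, hEsub⟩
  · -- injection into S by choosing a point of D ∩ S for each minimal D
    have hpt : ∀ D : {D : Set X // MinCofInv g S D ∧ D ⊆ Sig}, ((D : Set X) ∩ S).Nonempty :=
      fun D => cofInv_meets_S D.2.1.1 D.2.2
    have hinj : Function.Injective
        (fun D : {D : Set X // MinCofInv g S D ∧ D ⊆ Sig} =>
          (⟨(hpt D).choose, (hpt D).choose_spec.2⟩ : S)) := by
      intro D₁ D₂ h
      ext1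
      by_contra hne
      have hdisj : (D₁ : Set X) ∩ D₂ = ∅ :=
        minCofInv_inter_empty D₁.2.1 D₂.2.1 hne
      have hval : (hpt D₁).choose = (hpt D₂).choose := congrArg Subtype.val h
      have hx1 : (hpt D₁).choose ∈ (D₁ : Set X) := (hpt D₁).choose_spec.1
      have hx2 : (hpt D₁).choose ∈ (D₂ : Set X) := hval ▸ (hpt D₂).choose_spec.1
      have : (hpt D₁).choose ∈ (D₁ : Set X) ∩ D₂ := ⟨hx1, hx2⟩
      rw [hdisj] at this
      exact this
    exact Cardinal.mk_le_of_injective hinj
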